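/- Let P ∈ ℝ^(2n×2n) be symmetric positive definite with block decomposition [[P11, P12],[P12ᵀ, P22]], and suppose there exists L such that P(A − LC) + (A − LC)ᵀP + I ≺ 0, where A = [[0, I],[0, 0]] and C = [I, 0]. Then −P12 − P12ᵀ − I ≻ 0; in particular P12 is invertible and every eigenvalue of P12 has negative real part. -/

import Mathlib

/-! Because the second block column of `A - LC` is `[1; 0]`, the (2,2) block of the Lyapunov
matrix does not depend on `L` and equals `-P₁₂ - P₁₂ᵀ - 1`; as a principal block of a positive
definite matrix it is positive definite. Hence `-(P₁₂ + P₁₂ᵀ) ≻ 0`, and for an eigenpair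
`P₁₂ v = μ v` this gives `0 < v* (-(P₁₂ + P₁₂ᵀ)) v = -2 Re μ ‖v‖²`; invertibility is the case
`μ = 0`. -/

open Matrix
open scoped ComplexOrder

namespace Matrix

theorem PosDef.toBlocks₂₂ {m n R : Type*} [Ring R] [PartialOrder R]
    [StarRing R] {M : Matrix (m ⊕ n) (m ⊕ n) R} (hM : M.PosDef) : M.toBlocks₂₂.PosDef :=
  hM.submatrix Sum.inr_injective

section Blocks

variable {m R : Type*} [Fintype m] [DecidableEq m] [CommRing R]

theorem toBlocks₂₂_neg_mul_add_transpose_mul_add_one (P K : Matrix (m ⊕ m) (m ⊕ m) R)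
    (h₁₂ : K.toBlocks₁₂ = 1) (h₂₂ : K.toBlocks₂₂ = 0) :
    (-(P * K + Kᵀ * P + 1)).toBlocks₂₂ = -P.toBlocks₁₂ - P.toBlocks₂₁ - 1 := by
  conv_lhs => rw [← fromBlocks_toBlocks P, ← fromBlocks_toBlocks K, ← fromBlocks_one]
  simp only [fromBlocks_transpose, fromBlocks_multiply, fromBlocks_add, fromBlocks_neg,
    toBlocks_fromBlocks₂₂, h₁₂, h₂₂, transpose_one, transpose_zero, Matrix.mul_one,
    Matrix.one_mul, Matrix.mul_zero, Matrix.zero_mul, add_zero]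
  abel

variable (L : Matrix (m ⊕ m) m R)

theorem toBlocks₁₂_shift_sub_mul_fromCols :
    (fromBlocks 0 1 0 0 - L * (fromCols 1 0 : Matrix m (m ⊕ m) R)).toBlocks₁₂ = 1 := by
  ext i j
  simp [mul_fromCols, toBlocks₁₂]

theorem toBlocks₂₂_shift_sub_mul_fromCols :
    (fromBlocks 0 1 0 0 - L * (fromCols 1 0 : Matrix m (m ⊕ m) R)).toBlocks₂₂ = 0 := by
  ext i j
  simp [mul_fromCols, toBlocks₂₂]

end Blocks

section Complexification

variable {ι : Type*} [Fintype ι]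

theorem re_star_dotProduct_map_ofReal_mulVec (S : Matrix ι ι ℝ) (v : ι → ℂ) :
    (star v ⬝ᵥ S.map (↑) *ᵥ v).re =
      (fun i ↦ (v i).re) ⬝ᵥ S *ᵥ (fun i ↦ (v i).re) +
        (fun i ↦ (v i).im) ⬝ᵥ S *ᵥ (fun i ↦ (v i).im) := by
  simp only [dotProduct, mulVec, Complex.re_sum, Finset.mul_sum, ← Finset.sum_add_distrib]
  refine Finset.sum_congr rfl fun i _ ↦ Finset.sum_congr rfl fun j _ ↦ ?_
  simp only [Pi.star_apply, map_apply, Complex.mul_re, Complex.mul_im, Complex.star_def,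
    Complex.conj_re, Complex.conj_im, Complex.ofReal_re, Complex.ofReal_im]
  ring

theorem PosDef.map_ofReal {H : Matrix ι ι ℝ} (hH : H.PosDef) :
    (H.map (↑) : Matrix ι ι ℂ).PosDef := by
  have hHerm : (H.map (↑) : Matrix ι ι ℂ).IsHermitian :=
    hH.isHermitian.map _ fun x ↦ (Complex.conj_ofReal x).symm
  refine .of_dotProduct_mulVec_pos hHerm fun v hv ↦ Complex.lt_def.mpr ⟨?_, ?_⟩
  · have hpos {x : ι → ℝ} (hx : x ≠ 0) : 0 < x ⬝ᵥ H *ᵥ x := by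
      simpa using hH.dotProduct_mulVec_pos hx
    have hnonneg (x : ι → ℝ) : 0 ≤ x ⬝ᵥ H *ᵥ x := by
      simpa using hH.posSemidef.dotProduct_mulVec_nonneg x
    rw [Complex.zero_re, re_star_dotProduct_map_ofReal_mulVec]
    by_cases hre : (fun i ↦ (v i).re) = 0
    · have him : (fun i ↦ (v i).im) ≠ 0 := fun him ↦
        hv <| funext fun i ↦ Complex.ext (congrFun hre i) (congrFun him i)
      linarith [hnonneg fun i ↦ (v i).re, hpos him]
    · linarith [hpos hre, hnonneg fun i ↦ (v i).im]
  · exact (hHerm.im_star_dotProduct_mulVec_self v).symm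

theorem re_lt_zero_of_posDef_neg_add_conjTranspose {T : Matrix ι ι ℂ}
    (hT : (-(T + Tᴴ)).PosDef) {μ : ℂ} {v : ι → ℂ} (hv : v ≠ 0) (hμ : T *ᵥ v = μ • v) :
    μ.re < 0 := by
  have hform : star v ⬝ᵥ (-(T + Tᴴ)) *ᵥ v = -(μ + star μ) * (star v ⬝ᵥ v) := by
    have hadj : star v ⬝ᵥ Tᴴ *ᵥ v = star μ * (star v ⬝ᵥ v) := by
      rw [dotProduct_mulVec, ← star_mulVec, hμ, star_smul, smul_dotProduct, smul_eq_mul]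
    rw [neg_mulVec, add_mulVec, dotProduct_neg, dotProduct_add, hadj, hμ, dotProduct_smul,
      smul_eq_mul]
    ring
  have hnorm : 0 < star v ⬝ᵥ v := dotProduct_star_self_pos_iff.mpr hv
  have h := hT.dotProduct_mulVec_pos hv
  rw [hform] at h
  obtain ⟨hnorm_re, hnorm_im⟩ := Complex.lt_def.mp hnorm
  have h_re := (Complex.lt_def.mp h).1
  simp only [Complex.mul_re, Complex.neg_re, Complex.add_re, Complex.star_def, Complex.conj_re,
    Complex.zero_re, Complex.zero_im, ← hnorm_im, mul_zero, sub_zero] at h_re hnorm_re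
  nlinarith

theorem isUnit_det_of_posDef_neg_add_conjTranspose [DecidableEq ι] {T : Matrix ι ι ℂ}
    (hT : (-(T + Tᴴ)).PosDef) : IsUnit T.det := by
  refine isUnit_iff_ne_zero.mpr fun hdet ↦ ?_
  obtain ⟨v, hv, hTv⟩ := exists_mulVec_eq_zero_iff.mpr hdet
  simpa using re_lt_zero_of_posDef_neg_add_conjTranspose hT hv (μ := 0) (by simpa using hTv)

end Complexification

end Matrix

theorem corollary_P12_hurwitz_general (n : ℕ)
    (P11 P12 P22 : Matrix (Fin n) (Fin n) ℝ)
    (A : Matrix (Fin n ⊕ Fin n) (Fin n ⊕ Fin n) ℝ)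
    (C : Matrix (Fin n) (Fin n ⊕ Fin n) ℝ)
    (hA : A = Matrix.fromBlocks 0 1 0 0)
    (hC : C = Matrix.fromCols 1 0)
    (hL : ∃ L : Matrix (Fin n ⊕ Fin n) (Fin n) ℝ,
      (-((Matrix.fromBlocks P11 P12 P12ᵀ P22) * (A - L * C)
        + (A - L * C)ᵀ * (Matrix.fromBlocks P11 P12 P12ᵀ P22) + 1)).PosDef) :
    (-P12 - P12ᵀ - 1).PosDef ∧ IsUnit P12.det ∧
      (∀ (μ : ℂ) (v : Fin n → ℂ), v ≠ 0 →
        (P12.map Complex.ofReal).mulVec v = μ • v → μ.re < 0) := by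
  obtain ⟨L, hL⟩ := hL
  subst hA hC
  have hD : (-P12 - P12ᵀ - 1).PosDef := by
    have h := hL.toBlocks₂₂
    rwa [toBlocks₂₂_neg_mul_add_transpose_mul_add_one _ _ (toBlocks₁₂_shift_sub_mul_fromCols L)
      (toBlocks₂₂_shift_sub_mul_fromCols L), toBlocks_fromBlocks₁₂, toBlocks_fromBlocks₂₁] at h
  set T : Matrix (Fin n) (Fin n) ℂ := P12.map (↑)
  have hT : (-(T + Tᴴ)).PosDef := by
    have hS := hD.add_posSemidef PosSemidef.one
    rw [sub_add_cancel, ← neg_add'] at hS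
    convert hS.map_ofReal using 1
    ext i j
    simp [T]
  refine ⟨hD, ?_, fun μ v hv hμ ↦ re_lt_zero_of_posDef_neg_add_conjTranspose hT hv hμ⟩
  have hdet : IsUnit (Complex.ofRealHom P12.det) := by
    rw [RingHom.map_det]
    exact isUnit_det_of_posDef_neg_add_conjTranspose hT
  simpa using hdet

/-- Corollary 1: if P = [[P11, P12],[P12ᵀ, P22]] ≻ 0 and there exists L with
P(A − LC) + (A − LC)ᵀP + I ≺ 0 (A the block shift, C = [I, 0]), then
−P12 − P12ᵀ − I ≻ 0, P12 is invertible, and every eigenvalue of P12 has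
negative real part. -/
theorem corollary_P12_hurwitz (n : ℕ) (hn : 0 < n)
    (P11 P12 P22 : Matrix (Fin n) (Fin n) ℝ)
    (A : Matrix (Fin n ⊕ Fin n) (Fin n ⊕ Fin n) ℝ)
    (C : Matrix (Fin n) (Fin n ⊕ Fin n) ℝ)
    (hA : A = Matrix.fromBlocks 0 1 0 0)
    (hC : C = Matrix.fromCols 1 0)
    (hP : (Matrix.fromBlocks P11 P12 P12ᵀ P22).PosDef)
    (hL : ∃ L : Matrix (Fin n ⊕ Fin n) (Fin n) ℝ,
      (-((Matrix.fromBlocks P11 P12 P12ᵀ P22) * (A - L * C)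
        + (A - L * C)ᵀ * (Matrix.fromBlocks P11 P12 P12ᵀ P22) + 1)).PosDef) :
    (-P12 - P12ᵀ - 1).PosDef ∧ IsUnit P12.det ∧
      (∀ (μ : ℂ) (v : Fin n → ℂ), v ≠ 0 →
        (P12.map Complex.ofReal).mulVec v = μ • v → μ.re < 0) :=
  corollary_P12_hurwitz_general n P11 P12 P22 A C hA hC hL
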